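/- If the critical orbit closure ω(c) of a tent map T is a Cantor set with c recurrent (in particular ω(c) ≠ [c_2,c_1]), then the inverse limit X of T does not contain a homeomorphic copy of every core tent-map inverse limit; specifically, X contains no subcontinuum homeomorphic to the core inverse limit of a tent map with critical orbit dense in its core. -/

import Mathlib

open Set Filter Topology

/-- The inverse limit `lim←(K, T)`, as the space of backward orbits. -/
abbrev InvLim (T : ℝ → ℝ) (K : Set ℝ) :=
  {x : ℕ → ℝ // (∀ n, x n ∈ K) ∧ ∀ n, T (x (n + 1)) = x n}

/-- The ω-limit set of `c` under `T`. -/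
def omegaSet (T : ℝ → ℝ) (c : ℝ) : Set ℝ :=
  {y | ∃ φ : ℕ → ℕ, StrictMono φ ∧
    Filter.Tendsto (fun n => T^[φ n] c) Filter.atTop (nhds y)}

/-!
Since `ω(c)` is closed and totally disconnected, the closure `P` of the critical orbit of `T`,
which is the orbit together with `ω(c)`, has empty interior. A nondegenerate subcontinuum `H` of
`X` therefore has a point with a coordinate `n` outside `P`, and near it the `n`-th coordinate is
injective on connected subsets of `H`: two points that agree at level `n` but not above would be
separated by the fold of `T`, so the connected set would pass through `1/2` above level `n` and
put a point of the critical orbit at level `n`.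

In the core inverse limit `Y` of `T'` with dense critical orbit this fails in every open set,
which contains a cylinder `{z | z M ∈ J}`. For slope `> √2` the iterates of `[c₂, 1/2]` eventually
cover the core, so whenever `T'^N (1/2)` returns near the centre of `J`, the largest symmetric
interval around `1/2` that `T'^N` maps into `J` exits `J` at its endpoints. It lifts to an arc of
`Y` in the cylinder that is folded at its middle: its endpoints agree on the first `N + M`
coordinates. These hairpins accumulate (Kuratowski upper limit) on a connected subset of the
cylinder with two distinct points, on which every continuous function that is injective on the
arcs is constant, being squeezed between its values at the converging endpoints.
-/

open Function Metric Uniformity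

noncomputable def tentMap (σ x : ℝ) : ℝ := min (σ * x) (σ * (1 - x))

/-- The core `[c₂, c₁] = [T²(1/2), T(1/2)]` of the tent map. -/
def tentCore (σ : ℝ) : Set ℝ := Icc (σ * (1 - σ / 2)) (σ / 2)

section TentMap

variable {σ x y : ℝ}

lemma tentMap_of_le (hσ : 0 ≤ σ) (hx : x ≤ 1 / 2) : tentMap σ x = σ * x :=
  min_eq_left (by nlinarith)

lemma tentMap_of_ge (hσ : 0 ≤ σ) (hx : 1 / 2 ≤ x) : tentMap σ x = σ * (1 - x) :=
  min_eq_right (by nlinarith)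

lemma tentMap_half (hσ : 0 ≤ σ) : tentMap σ (1 / 2) = σ / 2 := by
  rw [tentMap_of_le hσ le_rfl]; ring

lemma tentMap_le (hσ : 0 ≤ σ) (x : ℝ) : tentMap σ x ≤ σ / 2 := by
  rcases le_total x (1 / 2) with hx | hx
  · rw [tentMap_of_le hσ hx]; nlinarith
  · rw [tentMap_of_ge hσ hx]; nlinarith

lemma tentMap_one_sub (σ x : ℝ) : tentMap σ (1 - x) = tentMap σ x := by
  rw [tentMap, tentMap, sub_sub_cancel, min_comm]

lemma tentMap_iterate_one_sub {n : ℕ} (hn : n ≠ 0) (x : ℝ) :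
    (tentMap σ)^[n] (1 - x) = (tentMap σ)^[n] x := by
  obtain ⟨m, rfl⟩ := Nat.exists_eq_succ_of_ne_zero hn
  rw [iterate_succ_apply, iterate_succ_apply, tentMap_one_sub]

lemma continuous_tentMap (σ : ℝ) : Continuous (tentMap σ) := by
  unfold tentMap; fun_prop

lemma half_mem_uIcc_of_tentMap_eq (hσ : 0 < σ) (hxy : x ≠ y)
    (h : tentMap σ x = tentMap σ y) : 1 / 2 ∈ uIcc x y := by
  rw [mem_uIcc]
  rcases le_total x (1 / 2) with hx | hx <;> rcases le_total y (1 / 2) with hy | hy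
  · rw [tentMap_of_le hσ.le hx, tentMap_of_le hσ.le hy] at h
    exact absurd (mul_left_cancel₀ hσ.ne' h) hxy
  · exact Or.inl ⟨hx, hy⟩
  · exact Or.inr ⟨hy, hx⟩
  · rw [tentMap_of_ge hσ.le hx, tentMap_of_ge hσ.le hy] at h
    exact absurd (by linarith [mul_left_cancel₀ hσ.ne' h]) hxy

lemma tentCore_eq (hσ : 1 ≤ σ) :
    Icc ((tentMap σ)^[2] (1 / 2)) (tentMap σ (1 / 2)) = tentCore σ := by
  rw [iterate_succ_apply, iterate_one, tentMap_half (by linarith),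
    tentMap_of_ge (by linarith) (by linarith)]
  rfl

end TentMap

section Core

variable {σ : ℝ}

lemma half_mem_tentCore (h1 : 1 ≤ σ) : (1 / 2 : ℝ) ∈ tentCore σ :=
  ⟨by nlinarith [sq_nonneg (σ - 1)], by linarith⟩

lemma right_mem_tentCore (h1 : 1 ≤ σ) : σ / 2 ∈ tentCore σ :=
  ⟨by nlinarith, le_rfl⟩

lemma mapsTo_tentMap_tentCore (h1 : 1 ≤ σ) (h2 : σ ≤ 2) :
    MapsTo (tentMap σ) (tentCore σ) (tentCore σ) := by
  rintro x ⟨hx₁, hx₂⟩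
  refine ⟨?_, tentMap_le (by linarith) x⟩
  rcases le_total x (1 / 2) with hx | hx
  · rw [tentMap_of_le (by linarith) hx]; nlinarith
  · rw [tentMap_of_ge (by linarith) hx]; nlinarith

lemma surjOn_tentMap_uIcc (σ a b : ℝ) :
    SurjOn (tentMap σ) (uIcc a b) (uIcc (tentMap σ a) (tentMap σ b)) :=
  intermediate_value_uIcc (continuous_tentMap σ).continuousOn

lemma surjOn_tentMap_right_half (h1 : 1 ≤ σ) :
    SurjOn (tentMap σ) (Icc (1 / 2) (σ / 2)) (tentCore σ) := by
  have := surjOn_tentMap_uIcc σ (1 / 2) (σ / 2)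
  rwa [tentMap_half (by linarith), tentMap_of_ge (by linarith) (by linarith),
    uIcc_of_le (by linarith), uIcc_of_ge (by nlinarith)] at this

lemma surjOn_tentMap_tentCore (h1 : 1 ≤ σ) : SurjOn (tentMap σ) (tentCore σ) (tentCore σ) :=
  (surjOn_tentMap_right_half h1).mono (Icc_subset_Icc (half_mem_tentCore h1).1 le_rfl) le_rfl

lemma exists_surjOn_tentMap_Icc_of_mem (hσ : 0 ≤ σ) {α β : ℝ} (hα : α ≤ 1 / 2)
    (hβ : 1 / 2 ≤ β) : ∃ m, m ≤ σ * α ∧ m ≤ σ * (1 - β) ∧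
      SurjOn (tentMap σ) (Icc α β) (Icc m (σ / 2)) := by
  have hL := (surjOn_tentMap_uIcc σ α (1 / 2)).mono
    (uIcc_subset_Icc ⟨le_rfl, hα.trans hβ⟩ ⟨hα, hβ⟩) le_rfl
  have hR := (surjOn_tentMap_uIcc σ (1 / 2) β).mono
    (uIcc_subset_Icc ⟨hα, hβ⟩ ⟨hα.trans hβ, le_rfl⟩) le_rfl
  rw [tentMap_half hσ, tentMap_of_le hσ hα, uIcc_of_le (by nlinarith)] at hL
  rw [tentMap_half hσ, tentMap_of_ge hσ hβ, uIcc_comm, uIcc_of_le (by nlinarith)] at hR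
  rcases le_total (σ * α) (σ * (1 - β)) with h | h
  · exact ⟨_, le_rfl, h, hL⟩
  · exact ⟨_, h, le_rfl, hR⟩

lemma tentMap_expand (h1 : 1 ≤ σ) (h2 : σ ≤ 2) {α β : ℝ} (hαβ : α ≤ β) :
    SurjOn (tentMap σ)^[2] (Icc α β) (tentCore σ) ∨
      ∃ α' β' : ℝ, ∃ i, σ ^ 2 / 2 * (β - α) ≤ β' - α' ∧
        SurjOn (tentMap σ)^[i] (Icc α β) (Icc α' β') := by
  have hσ : 0 ≤ σ := by linarith
  rcases le_total β (1 / 2) with hβ | hβ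
  · refine Or.inr ⟨σ * α, σ * β, 1, ?_, ?_⟩
    · nlinarith [mul_nonneg hσ (mul_nonneg (sub_nonneg.2 h2) (sub_nonneg.2 hαβ))]
    have := surjOn_tentMap_uIcc σ α β
    rwa [uIcc_of_le hαβ, tentMap_of_le hσ (hαβ.trans hβ), tentMap_of_le hσ hβ,
      uIcc_of_le (by nlinarith)] at this
  rcases le_total (1 / 2) α with hα | hα
  · refine Or.inr ⟨σ * (1 - β), σ * (1 - α), 1, ?_, ?_⟩
    · nlinarith [mul_nonneg hσ (mul_nonneg (sub_nonneg.2 h2) (sub_nonneg.2 hαβ))]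
    have := surjOn_tentMap_uIcc σ α β
    rwa [uIcc_of_le hαβ, tentMap_of_ge hσ hα, tentMap_of_ge hσ (hα.trans hαβ),
      uIcc_of_ge (by nlinarith)] at this
  obtain ⟨m, hmα, hmβ, hm⟩ := exists_surjOn_tentMap_Icc_of_mem hσ hα hβ
  rcases le_total m (1 / 2) with hm2 | hm2
  · exact Or.inl <| ((surjOn_tentMap_right_half h1).mono (Icc_subset_Icc hm2 le_rfl)
      le_rfl).comp hm
  · refine Or.inr ⟨σ * (1 - σ / 2), σ * (1 - m), 2, ?_, ?_⟩
    · nlinarith [mul_nonneg hσ hσ]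
    have hmσ : m ≤ σ / 2 := hmα.trans (by nlinarith)
    have := surjOn_tentMap_uIcc σ m (σ / 2)
    rw [uIcc_of_le hmσ, tentMap_of_ge hσ hm2, tentMap_of_ge hσ (by linarith),
      uIcc_of_ge (by nlinarith)] at this
    exact this.comp hm

/-- Lengths grow by the factor `σ² / 2 > 1` under `tentMap_expand` but cannot exceed the length
of the core. -/
lemma exists_surjOn_tentMap_iterate (h1 : 1 ≤ σ) (h2 : σ ≤ 2) (hσ : 2 < σ ^ 2) {α β : ℝ}
    (hJ : Icc α β ⊆ tentCore σ) (hαβ : α < β) :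
    ∃ i, SurjOn (tentMap σ)^[i] (Icc α β) (tentCore σ) := by
  obtain ⟨k, hk⟩ := pow_unbounded_of_one_lt ((σ / 2 - σ * (1 - σ / 2)) / (β - α))
    (by linarith : 1 < σ ^ 2 / 2)
  rw [div_lt_iff₀ (sub_pos.2 hαβ)] at hk
  induction k generalizing α β with
  | zero =>
    have hα := (hJ ⟨le_rfl, hαβ.le⟩).1
    have hβ := (hJ ⟨hαβ.le, le_rfl⟩).2
    rw [pow_zero, one_mul] at hk
    linarith
  | succ k ih =>
    rcases tentMap_expand h1 h2 hαβ.le with h | ⟨α', β', i, hlen, hsurj⟩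
    · exact ⟨2, h⟩
    have hJ' : Icc α' β' ⊆ tentCore σ :=
      hsurj.trans (((mapsTo_tentMap_tentCore h1 h2).iterate i).mono_left hJ).image_subset
    have hpos : 0 < σ ^ 2 / 2 * (β - α) := mul_pos (by positivity) (sub_pos.2 hαβ)
    obtain ⟨i', hi'⟩ := ih hJ' (by linarith) <| hk.trans_le <| by
      rw [pow_succ, mul_assoc]
      exact mul_le_mul_of_nonneg_left hlen (by positivity)
    exact ⟨i' + i, by rw [iterate_add]; exact hi'.comp hsurj⟩

lemma eventually_surjOn_tentMap_iterate (h1 : 1 ≤ σ) (h2 : σ ≤ 2) (hσ : 2 < σ ^ 2)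
    {α β : ℝ} (hJ : Icc α β ⊆ tentCore σ) (hαβ : α < β) :
    ∀ᶠ j in atTop, SurjOn (tentMap σ)^[j] (Icc α β) (tentCore σ) := by
  obtain ⟨i, hi⟩ := exists_surjOn_tentMap_iterate h1 h2 hσ hJ hαβ
  filter_upwards [eventually_ge_atTop i] with j hj
  rw [← Nat.sub_add_cancel hj, iterate_add]
  exact ((surjOn_tentMap_tentCore h1).iterate _).comp hi

end Core

lemma ContinuousOn.exists_first_eq {φ : ℝ → ℝ} {a b r : ℝ} (hab : a ≤ b)
    (hφ : ContinuousOn φ (Icc a b)) (ha : φ a ≤ r) (hb : r < φ b) :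
    ∃ d ∈ Icc a b, (∀ t ∈ Icc a d, φ t ≤ r) ∧ φ d = r := by
  have hZ : IsCompact (Icc a b ∩ φ ⁻¹' {r}) := isCompact_Icc.of_isClosed_subset
    (hφ.preimage_isClosed_of_isClosed isClosed_Icc isClosed_singleton) inter_subset_left
  obtain ⟨t₀, ht₀, ht₀r⟩ := intermediate_value_Icc hab hφ ⟨ha, hb.le⟩
  obtain ⟨d, ⟨hd, hdr⟩, hmin⟩ := hZ.exists_isLeast ⟨t₀, ht₀, ht₀r⟩
  refine ⟨d, hd, fun t ht => ?_, hdr⟩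
  by_contra! hlt
  have htb : t ≤ b := ht.2.trans hd.2
  obtain ⟨t', ht', ht'r⟩ := intermediate_value_Icc ht.1
    (hφ.mono (Icc_subset_Icc le_rfl htb)) ⟨ha, hlt.le⟩
  have hdt' : d ≤ t' := hmin ⟨⟨ht'.1, ht'.2.trans htb⟩, ht'r⟩
  have : t' = t := le_antisymm ht'.2 (ht.2.trans hdt')
  exact hlt.ne' (this ▸ ht'r)

lemma ContinuousOn.image_Icc_subset_uIcc {F : ℝ → ℝ} {p q : ℝ} (hpq : p ≤ q)
    (hF : ContinuousOn F (Icc p q)) (hinj : InjOn F (Icc p q)) :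
    F '' Icc p q ⊆ uIcc (F p) (F q) := by
  rcases hF.strictMonoOn_of_injOn_Icc' hpq hinj with h | h <;> rw [← uIcc_of_le hpq] at h ⊢
  · exact h.monotoneOn.image_uIcc_subset
  · exact h.antitoneOn.image_uIcc_subset

section Hairpin

variable {σ : ℝ}

/-- By the symmetry `T^N (1/2 - t) = T^N (1/2 + t)`, `d` is the first exit time of
`t ↦ T^N (1/2 + t)` from the ball; the exit happens because `T^N` maps `[c₂, 1/2]` onto the core. -/
lemma exists_hairpin (h1 : 1 ≤ σ) (h2 : σ ≤ 2) {N : ℕ} (hN : N ≠ 0)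
    (hcov : SurjOn (tentMap σ)^[N] (Icc (σ * (1 - σ / 2)) (1 / 2)) (tentCore σ))
    {v ρ : ℝ} (hv : v + ρ < σ / 2) (hc : dist ((tentMap σ)^[N] (1 / 2)) v ≤ ρ) :
    ∃ d ≥ 0, Icc (1 / 2 - d) (1 / 2 + d) ⊆ tentCore σ ∧
      MapsTo (tentMap σ)^[N] (Icc (1 / 2 - d) (1 / 2 + d)) (closedBall v ρ) ∧
      dist ((tentMap σ)^[N] (1 / 2 + d)) v = ρ := by
  set F := (tentMap σ)^[N] with hF
  have hsymm : ∀ t, F (1 / 2 - t) = F (1 / 2 + t) := fun t => by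
    rw [hF, ← tentMap_iterate_one_sub hN (1 / 2 + t)]; ring_nf
  have hρ : 0 ≤ ρ := dist_nonneg.trans hc
  obtain ⟨u, hu, hFu⟩ := hcov (right_mem_tentCore h1)
  have hφ : Continuous fun t => dist (F (1 / 2 + t)) v :=
    (((continuous_tentMap σ).iterate N).comp (continuous_const_add _)).dist continuous_const
  have hexit : ρ < dist (F (1 / 2 + (1 / 2 - u))) v := by
    rw [← hsymm, sub_sub_cancel, hFu, Real.dist_eq, abs_of_pos (by linarith)]
    linarith
  obtain ⟨d, hd, hle, hdρ⟩ := hφ.continuousOn.exists_first_eq (a := 0) (by linarith [hu.2])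
    (by simpa using hc) hexit
  refine ⟨d, hd.1, fun x hx => ⟨?_, ?_⟩, fun x hx => ?_, hdρ⟩
  · linarith [hu.1, hx.1, hd.2]
  · nlinarith [hu.1, hx.2, hd.2]
  rcases le_total x (1 / 2) with h | h
  · have := hle (1 / 2 - x) ⟨by linarith, by linarith [hx.1]⟩
    rwa [← hsymm, sub_sub_cancel, ← mem_closedBall] at this
  · have := hle (x - 1 / 2) ⟨by linarith, by linarith [hx.2]⟩
    rwa [add_sub_cancel, ← mem_closedBall] at this

end Hairpin

namespace InvLim

variable {f : ℝ → ℝ} {K : Set ℝ}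

lemma coord_eq_iterate (x : InvLim f K) {i j : ℕ} (h : i ≤ j) : x.1 i = f^[j - i] (x.1 j) := by
  obtain ⟨d, rfl⟩ := Nat.exists_eq_add_of_le h
  rw [Nat.add_sub_cancel_left]
  clear h
  induction d with
  | zero => rfl
  | succ d ih => rw [iterate_succ_apply, ← add_assoc, x.2.2, ih]

lemma continuous_coord (n : ℕ) : Continuous fun x : InvLim f K => x.1 n :=
  (continuous_apply n).comp continuous_subtype_val

instance : FirstCountableTopology (InvLim f K) :=
  IsEmbedding.subtypeVal.firstCountableTopology

lemma compactSpace (hf : Continuous f) (hK : IsCompact K) : CompactSpace (InvLim f K) := by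
  have hclosed : IsClosed {x : ℕ → ℝ | (∀ n, x n ∈ K) ∧ ∀ n, f (x (n + 1)) = x n} := by
    simp only [ofPred_and, ofPred_forall]
    exact (isClosed_iInter fun n => hK.isClosed.preimage (continuous_apply n)).inter
      (isClosed_iInter fun n => isClosed_eq (hf.comp (continuous_apply _)) (continuous_apply n))
  exact isCompact_iff_compactSpace.mp ((isCompact_univ_pi fun _ => hK).of_isClosed_subset
    hclosed fun x hx => mem_univ_pi.2 hx.1)

/-- The coordinate `M` determines all earlier ones continuously. -/
lemma exists_coord_preimage_subset (hf : Continuous f) {U : Set (InvLim f K)} (hU : IsOpen U)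
    {y : InvLim f K} (hy : y ∈ U) :
    ∃ M : ℕ, ∃ O : Set ℝ, IsOpen O ∧ y.1 M ∈ O ∧ {z : InvLim f K | z.1 M ∈ O} ⊆ U := by
  obtain ⟨O', hO', rfl⟩ := isOpen_induced_iff.mp hU
  obtain ⟨I, u, hu, hsub⟩ := isOpen_pi_iff.mp hO' y.1 hy
  have hle : ∀ a ∈ I, a ≤ I.sup id := fun a ha => Finset.le_sup (f := id) ha
  refine ⟨I.sup id, ⋂ a ∈ I, f^[I.sup id - a] ⁻¹' u a,
    isOpen_biInter_finset fun a ha => (hu a ha).1.preimage (hf.iterate _),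
    mem_iInter₂.2 fun a ha => ?_, fun z hz => hsub fun a ha => ?_⟩
  · rw [mem_preimage, ← coord_eq_iterate y (hle a ha)]
    exact (hu a ha).2
  · rw [coord_eq_iterate z (hle a ha)]
    exact mem_iInter₂.1 hz a ha

lemma tendsto_uniformity_of_coord_eq {ι : Type*} {l : Filter ι} {A B : ι → InvLim f K}
    (h : ∀ j, ∀ᶠ k in l, (A k).1 j = (B k).1 j) :
    Tendsto (fun k => (A k, B k)) l (𝓤 (InvLim f K)) := by
  rw [uniformity_subtype, tendsto_comap_iff, Pi.uniformity, tendsto_iInf]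
  refine fun j => tendsto_comap_iff.2 ((tendsto_diag_uniformity (fun k => (A k).1 j) l).congr' ?_)
  filter_upwards [h j] with k hk
  simp [hk]

end InvLim

section Thread

variable {σ : ℝ}

lemma tentMap_one_sub_div (hσ : 0 < σ) {x : ℝ} (hx : x ≤ σ / 2) : tentMap σ (1 - x / σ) = x := by
  rw [tentMap_of_ge hσ.le (by rw [le_sub_comm, div_le_iff₀ hσ]; linarith)]
  field_simp
  ring

lemma mapsTo_one_sub_div_tentCore (h1 : 1 ≤ σ) :
    MapsTo (fun x => 1 - x / σ) (tentCore σ) (tentCore σ) := by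
  rintro x ⟨hx₁, hx₂⟩
  have hσ : 0 < σ := by linarith
  constructor
  · have : x / σ ≤ 1 / 2 := by rw [div_le_iff₀ hσ]; linarith
    nlinarith [half_mem_tentCore h1]
  · have : 1 - σ / 2 ≤ x / σ := by rw [le_div_iff₀ hσ]; linarith
    linarith

/-- The backward orbit passing through `u` at time `L`, continued beyond `L` along the decreasing
inverse branch `x ↦ 1 - x / σ` of `T`. -/
noncomputable def tentThread (σ : ℝ) (L : ℕ) (u : ℝ) (j : ℕ) : ℝ :=
  (tentMap σ)^[L - j] ((fun x => 1 - x / σ)^[j - L] u)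

lemma tentThread_of_le {L j : ℕ} (h : j ≤ L) (u : ℝ) :
    tentThread σ L u j = (tentMap σ)^[L - j] u := by
  rw [tentThread, Nat.sub_eq_zero_of_le h, iterate_zero_apply]

lemma continuous_tentThread (σ : ℝ) (L j : ℕ) : Continuous fun u => tentThread σ L u j :=
  ((continuous_tentMap σ).iterate _).comp
    ((by fun_prop : Continuous fun x : ℝ => 1 - x / σ).iterate _)

lemma tentThread_mem (h1 : 1 ≤ σ) (h2 : σ ≤ 2) {u : ℝ} (hu : u ∈ tentCore σ) (L j : ℕ) :
    tentThread σ L u j ∈ tentCore σ :=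
  (mapsTo_tentMap_tentCore h1 h2).iterate _ (((mapsTo_one_sub_div_tentCore h1).iterate _) hu)

lemma tentMap_tentThread_succ (h1 : 1 ≤ σ) {u : ℝ} (hu : u ∈ tentCore σ)
    (L j : ℕ) : tentMap σ (tentThread σ L u (j + 1)) = tentThread σ L u j := by
  rcases lt_or_ge j L with h | h
  · rw [tentThread_of_le h, tentThread_of_le h.le, ← iterate_succ_apply' (tentMap σ)]
    congr 1
    omega
  · rw [tentThread, tentThread, Nat.sub_eq_zero_of_le h, Nat.sub_eq_zero_of_le (by omega),
      iterate_zero_apply, iterate_zero_apply, Nat.sub_add_comm h, iterate_succ_apply']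
    exact tentMap_one_sub_div (by linarith) (((mapsTo_one_sub_div_tentCore h1).iterate _) hu).2

lemma tentCore_left_le_right (h1 : 1 ≤ σ) : σ * (1 - σ / 2) ≤ σ / 2 :=
  (half_mem_tentCore h1).1.trans (half_mem_tentCore h1).2

/-- Projecting `u` onto the core first makes this continuous on all of `ℝ`. -/
noncomputable def coreThread (h1 : 1 ≤ σ) (h2 : σ ≤ 2) (L : ℕ) (u : ℝ) :
    InvLim (tentMap σ) (tentCore σ) :=
  ⟨tentThread σ L (projIcc _ _ (tentCore_left_le_right h1) u),
    tentThread_mem h1 h2 (projIcc _ _ _ u).2 L,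
    tentMap_tentThread_succ h1 (projIcc _ _ _ u).2 L⟩

variable (h1 : 1 ≤ σ) (h2 : σ ≤ 2)

lemma coreThread_coord_of_le {L j : ℕ} (hj : j ≤ L) {u : ℝ} (hu : u ∈ tentCore σ) :
    (coreThread h1 h2 L u).1 j = (tentMap σ)^[L - j] u := by
  show tentThread σ L (projIcc _ _ _ u) j = _
  rw [tentThread_of_le hj, projIcc_of_mem _ hu]

lemma continuous_coreThread (L : ℕ) : Continuous (coreThread h1 h2 L) :=
  Continuous.subtype_mk (continuous_pi fun j =>
    (continuous_tentThread σ L j).comp (continuous_subtype_val.comp continuous_projIcc)) _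

lemma injOn_coreThread (L : ℕ) : InjOn (coreThread h1 h2 L) (tentCore σ) := fun u hu w hw h => by
  simpa [coreThread_coord_of_le h1 h2 le_rfl hu, coreThread_coord_of_le h1 h2 le_rfl hw]
    using congrArg (fun z => z.1 L) h

lemma image_coreThread_subset_uIcc {g : InvLim (tentMap σ) (tentCore σ) → ℝ}
    (hg : Continuous g) {L : ℕ} {p q : ℝ} (hpq : p ≤ q) (hcore : Icc p q ⊆ tentCore σ)
    (hinj : InjOn g (coreThread h1 h2 L '' Icc p q)) :
    g '' (coreThread h1 h2 L '' Icc p q) ⊆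
      uIcc (g (coreThread h1 h2 L p)) (g (coreThread h1 h2 L q)) := by
  rw [image_image]
  exact ContinuousOn.image_Icc_subset_uIcc hpq
    (hg.comp (continuous_coreThread h1 h2 L)).continuousOn
    (hinj.comp ((injOn_coreThread h1 h2 L).mono hcore) (mapsTo_image _ _))

lemma coreThread_coord_mirror {L j : ℕ} (hj : j < L) {t : ℝ} (hp : 1 / 2 + t ∈ tentCore σ)
    (hm : 1 / 2 - t ∈ tentCore σ) :
    (coreThread h1 h2 L (1 / 2 + t)).1 j = (coreThread h1 h2 L (1 / 2 - t)).1 j := by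
  rw [coreThread_coord_of_le h1 h2 hj.le hp, coreThread_coord_of_le h1 h2 hj.le hm,
    ← tentMap_iterate_one_sub (by omega)]
  ring_nf

end Thread

section KuratowskiLimsup

variable {X : Type*} [TopologicalSpace X] {C : ℕ → Set X}

def kuratowskiLimsup (C : ℕ → Set X) : Set X := ⋂ K, closure (⋃ k ≥ K, C k)

lemma isClosed_kuratowskiLimsup (C : ℕ → Set X) : IsClosed (kuratowskiLimsup C) :=
  isClosed_iInter fun _ => isClosed_closure

lemma mem_kuratowskiLimsup_of_tendsto {p : ℕ → X} (hp : ∀ k, p k ∈ C k) {z : X}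
    (hz : Tendsto p atTop (𝓝 z)) : z ∈ kuratowskiLimsup C :=
  mem_iInter.2 fun K => mem_closure_of_tendsto hz <|
    (eventually_ge_atTop K).mono fun k hk => mem_iUnion₂.2 ⟨k, hk, hp k⟩

lemma kuratowskiLimsup_subset_of_eventually {V : Set X} (hV : IsClosed V)
    (h : ∀ᶠ k in atTop, C k ⊆ V) : kuratowskiLimsup C ⊆ V := by
  obtain ⟨K, hK⟩ := eventually_atTop.1 h
  exact (iInter_subset _ K).trans (closure_minimal (iUnion₂_subset hK) hV)

lemma eventually_subset_of_kuratowskiLimsup_subset [CompactSpace X] {O : Set X} (hO : IsOpen O)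
    (h : kuratowskiLimsup C ⊆ O) : ∀ᶠ k in atTop, C k ⊆ O := by
  by_contra hC
  rw [not_eventually] at hC
  set t : ℕ → Set X := fun K => closure (⋃ k ≥ K, C k) ∩ Oᶜ
  have hne : ∀ K, (t K).Nonempty := fun K => by
    obtain ⟨k, hk, hkO⟩ := (frequently_atTop.1 hC) K
    obtain ⟨x, hx, hxO⟩ := not_subset.1 hkO
    exact ⟨x, subset_closure (mem_iUnion₂.2 ⟨k, hk, hx⟩), hxO⟩
  have hclosed : ∀ K, IsClosed (t K) := fun K => isClosed_closure.inter hO.isClosed_compl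
  obtain ⟨z, hz⟩ := IsCompact.nonempty_iInter_of_sequence_nonempty_isCompact_isClosed t
    (fun K => inter_subset_inter_left _ (closure_mono (biUnion_subset_biUnion_left
      fun k (hk : K + 1 ≤ k) => (K.le_succ.trans hk : K ≤ k))))
    hne (hclosed 0).isCompact hclosed
  exact (mem_iInter.1 hz 0).2 (h (mem_iInter.2 fun K => (mem_iInter.1 hz K).1))

lemma isPreconnected_kuratowskiLimsup [CompactSpace X] [T2Space X]
    (hC : ∀ k, IsPreconnected (C k)) {a : ℕ → X} (ha : ∀ k, a k ∈ C k) {l : X}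
    (hl : Tendsto a atTop (𝓝 l)) : IsPreconnected (kuratowskiLimsup C) := by
  have hlS : l ∈ kuratowskiLimsup C := mem_kuratowskiLimsup_of_tendsto ha hl
  have key : ∀ u v, IsClosed u → IsClosed v → kuratowskiLimsup C ⊆ u ∪ v → Disjoint u v →
      l ∈ u → kuratowskiLimsup C ⊆ u := by
    intro u v hu hv huv hdisj hlu
    obtain ⟨O₁, O₂, hO₁, hO₂, hu₁, hv₂, hO⟩ := normal_separation hu hv hdisj
    have hev : ∀ᶠ k in atTop, C k ⊆ O₁ := by
      filter_upwards [eventually_subset_of_kuratowskiLimsup_subset (hO₁.union hO₂)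
        (huv.trans (union_subset_union hu₁ hv₂)), hl.eventually (hO₁.mem_nhds (hu₁ hlu))]
        with k hk hak
      exact (hC k).subset_left_of_subset_union hO₁ hO₂ hO hk ⟨a k, ha k, hak⟩
    intro z hz
    have hzO₂ : z ∈ O₂ᶜ := kuratowskiLimsup_subset_of_eventually hO₂.isClosed_compl
      (hev.mono fun k hk => hk.trans hO.subset_compl_right) hz
    exact (huv hz).resolve_right fun hzv => hzO₂ (hv₂ hzv)
  rw [isPreconnected_iff_subset_of_fully_disjoint_closed (isClosed_kuratowskiLimsup C)]
  intro u v hu hv huv hdisj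
  rcases huv hlS with hlu | hlv
  · exact Or.inl (key u v hu hv huv hdisj hlu)
  · exact Or.inr (key v u hv hu (union_comm u v ▸ huv) hdisj.symm hlv)

lemma apply_eq_of_mem_kuratowskiLimsup {g : X → ℝ} (hg : Continuous g) {A B : ℕ → X}
    (hgC : ∀ k, g '' C k ⊆ uIcc (g (A k)) (g (B k))) {ℓ : X} (hA : Tendsto A atTop (𝓝 ℓ))
    (hB : Tendsto B atTop (𝓝 ℓ)) {z : X} (hz : z ∈ kuratowskiLimsup C) : g z = g ℓ := by
  refine eq_of_forall_dist_le fun ε hε => ?_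
  have hball : closedBall (g ℓ) ε ∈ 𝓝 (g ℓ) := closedBall_mem_nhds _ hε
  refine kuratowskiLimsup_subset_of_eventually (isClosed_closedBall.preimage hg) ?_ hz
  filter_upwards [(hg.tendsto ℓ).comp hA hball, (hg.tendsto ℓ).comp hB hball] with k hAk hBk
  rw [← image_subset_iff]
  exact (hgC k).trans ((convex_closedBall _ _).ordConnected.uIcc_subset hAk hBk)

end KuratowskiLimsup

/-- Along a subsequence, the upper limit of the `C k` is preconnected, contains the distinct limits
of `a k` and `A k`, and `g` is constant on it. -/
lemma exists_isPreconnected_not_injOn {X : Type*} [UniformSpace X] [CompactSpace X]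
    [T2Space X] [FirstCountableTopology X] {V F₁ F₂ : Set X} (hV : IsClosed V)
    (hF₁ : IsClosed F₁) (hF₂ : IsClosed F₂) (hF : Disjoint F₁ F₂) {C : ℕ → Set X}
    (hC : ∀ k, IsPreconnected (C k)) (hCV : ∀ k, C k ⊆ V) {a A B : ℕ → X}
    (ha : ∀ k, a k ∈ C k ∩ F₁) (hA : ∀ k, A k ∈ C k ∩ F₂)
    (hAB : Tendsto (fun k => (A k, B k)) atTop (𝓤 X)) {g : X → ℝ} (hg : Continuous g)
    (hgC : ∀ k, g '' C k ⊆ uIcc (g (A k)) (g (B k))) :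
    ∃ S ⊆ V, IsPreconnected S ∧ ¬ InjOn g S := by
  obtain ⟨⟨aL, AL⟩, -, ψ, hψ, hlim⟩ :=
    isCompact_univ.tendsto_subseq (x := fun k => (a k, A k)) fun _ => mem_univ _
  have haL : Tendsto (a ∘ ψ) atTop (𝓝 aL) := (continuous_fst.tendsto _).comp hlim
  have hAL : Tendsto (A ∘ ψ) atTop (𝓝 AL) := (continuous_snd.tendsto _).comp hlim
  have hBL : Tendsto (B ∘ ψ) atTop (𝓝 AL) := hAL.congr_uniformity (hAB.comp hψ.tendsto_atTop)
  have haS := mem_kuratowskiLimsup_of_tendsto (C := C ∘ ψ) (fun k => (ha (ψ k)).1) haL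
  have hAS := mem_kuratowskiLimsup_of_tendsto (C := C ∘ ψ) (fun k => (hA (ψ k)).1) hAL
  have hne : aL ≠ AL := hF.ne_of_mem
    (hF₁.mem_of_tendsto haL (Eventually.of_forall fun k => (ha (ψ k)).2))
    (hF₂.mem_of_tendsto hAL (Eventually.of_forall fun k => (hA (ψ k)).2))
  refine ⟨kuratowskiLimsup (C ∘ ψ), kuratowskiLimsup_subset_of_eventually hV
    (Eventually.of_forall fun k => hCV (ψ k)), isPreconnected_kuratowskiLimsup
    (fun k => hC (ψ k)) (fun k => (ha (ψ k)).1) haL, fun hinj => hne (hinj haS hAS ?_)⟩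
  exact apply_eq_of_mem_kuratowskiLimsup hg (fun k => hgC (ψ k)) hAL hBL haS

lemma mapClusterPt_of_mem_closure_range {X : Type*} [TopologicalSpace X] [T1Space X]
    {u : ℕ → X} {x : X} (hx : x ∈ closure (range u)) (hxu : x ∉ range u) :
    MapClusterPt x atTop u := by
  rw [mapClusterPt_atTop_iff_forall_mem_closure]
  intro N
  rw [← image_univ, ← Iio_union_Ici (a := N), image_union, closure_union,
    ((finite_Iio N).image u).isClosed.closure_eq] at hx
  exact hx.resolve_left fun h => hxu (image_subset_range _ _ h)

lemma frequently_mem_of_subset_closure_range {u : ℕ → ℝ} {W : Set ℝ} (hW : IsOpen W)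
    (hne : W.Nonempty) (hWu : W ⊆ closure (range u)) : ∃ᶠ n in atTop, u n ∈ W := by
  obtain ⟨x, hxW, hxu⟩ := ((countable_range u).dense_compl ℝ).inter_open_nonempty W hW hne
  exact (mapClusterPt_of_mem_closure_range (hWu hxW) hxu).frequently (hW.mem_nhds hxW)

lemma closure_range_iterate_subset (f : ℝ → ℝ) (c : ℝ) :
    closure (range fun n => f^[n] c) ⊆ (range fun n => f^[n] c) ∪ omegaSet f c := by
  intro x hx
  by_cases hxr : x ∈ range fun n => f^[n] c
  · exact Or.inl hxr
  · obtain ⟨ψ, hψ, hlim⟩ := (mapClusterPt_of_mem_closure_range hx hxr).tendsto_subseq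
    exact Or.inr ⟨ψ, hψ, hlim⟩

lemma IsTotallyDisconnected.interior_eq_empty_real {S : Set ℝ} (h : IsTotallyDisconnected S) :
    interior S = ∅ := by
  refine eq_empty_of_forall_notMem fun x hx => ?_
  obtain ⟨ε, hε, hball⟩ := Metric.mem_nhds_iff.1 (mem_interior_iff_mem_nhds.1 hx)
  have hx' : x + ε / 2 ∈ ball x ε := by
    rw [mem_ball, Real.dist_eq, add_sub_cancel_left, abs_of_pos (by positivity)]
    linarith
  have := h _ hball (convex_ball x ε).isPreconnected hx' (mem_ball_self hε)
  linarith

lemma IsPreconnected.subsingleton_of_interior_eq_empty {S P : Set ℝ} (hS : IsPreconnected S)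
    (hSP : S ⊆ P) (hP : interior P = ∅) : S.Subsingleton := by
  intro x hx y hy
  by_contra hxy
  wlog hlt : x < y generalizing x y
  · exact this hy hx (Ne.symm hxy) (lt_of_le_of_ne (not_lt.1 hlt) (Ne.symm hxy))
  have : Ioo x y ⊆ interior P := by
    rw [← interior_Icc]
    exact interior_mono ((hS.Icc_subset hx hy).trans hSP)
  rw [hP] at this
  exact (nonempty_Ioo.2 hlt).ne_empty (subset_empty_iff.1 this)

/-- The closure of the orbit is the orbit together with `ω(c)`: a countable set and a closed set
without interior. -/
lemma interior_closure_range_iterate_eq_empty {f : ℝ → ℝ} {c : ℝ}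
    (hω : IsClosed (omegaSet f c)) (htd : IsTotallyDisconnected (omegaSet f c)) :
    interior (closure (range fun n => f^[n] c)) = ∅ := by
  have horbit : interior (range fun n => f^[n] c) = ∅ :=
    interior_eq_empty_iff_dense_compl.2 ((countable_range _).dense_compl ℝ)
  refine subset_empty_iff.1 ?_
  calc interior (closure (range fun n => f^[n] c))
      ⊆ interior (omegaSet f c ∪ range fun n => f^[n] c) :=
        interior_mono ((closure_range_iterate_subset f c).trans (union_comm _ _).subset)
    _ = ∅ := by rw [interior_union_isClosed_of_interior_empty hω horbit,
        htd.interior_eq_empty_real]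

/-- The first coordinate where two points of `S` differ is folded by `T`, so some point of `S`
passes through `1/2` there, which puts a point of the critical orbit at level `n`. -/
lemma InvLim.injOn_coord_of_isPreconnected {σ : ℝ} (hσ : 0 < σ) {K : Set ℝ}
    {S : Set (InvLim (tentMap σ) K)} (hS : IsPreconnected S) {n : ℕ} {W : Set ℝ}
    (hW : ∀ k, (tentMap σ)^[k] (1 / 2) ∉ W) (hSW : ∀ x ∈ S, x.1 n ∈ W) :
    InjOn (fun x => x.1 n) S := by
  intro x hx y hy hxy
  refine Subtype.ext (funext fun m => ?_)
  induction m with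
  | zero =>
    rw [coord_eq_iterate x (Nat.zero_le n), coord_eq_iterate y (Nat.zero_le n)]
    exact congrArg _ hxy
  | succ m ih =>
    rcases le_or_gt (m + 1) n with h | h
    · rw [coord_eq_iterate x h, coord_eq_iterate y h]; exact congrArg _ hxy
    by_contra hne
    obtain ⟨z, hz, hz_half⟩ : ∃ z ∈ S, z.1 (m + 1) = 1 / 2 :=
      (hS.image _ (continuous_coord (m + 1)).continuousOn).ordConnected.uIcc_subset
        ⟨x, hx, rfl⟩ ⟨y, hy, rfl⟩ (half_mem_uIcc_of_tentMap_eq hσ hne (by rw [x.2.2, y.2.2, ih]))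
    exact hW (m + 1 - n) (by rw [← hz_half, ← coord_eq_iterate z h.le]; exact hSW z hz)

/-- A weak form of having a point that is not a folding point, i.e. a point with a neighbourhood
homeomorphic to `Cantor set × arc`. -/
def HasUnfoldedOpenSet (Z : Type*) [TopologicalSpace Z] : Prop :=
  ∃ U : Set Z, IsOpen U ∧ U.Nonempty ∧ ∃ g : Z → ℝ, Continuous g ∧
    ∀ S ⊆ U, IsPreconnected S → InjOn g S

lemma HasUnfoldedOpenSet.of_homeomorph {Z W : Type*} [TopologicalSpace Z] [TopologicalSpace W]
    (h : HasUnfoldedOpenSet Z) (e : Z ≃ₜ W) : HasUnfoldedOpenSet W := by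
  obtain ⟨U, hU, hne, g, hg, hinj⟩ := h
  refine ⟨e '' U, e.isOpenMap U hU, hne.image e, g ∘ e.symm, hg.comp e.symm.continuous,
    fun S hS hSc => ?_⟩
  have hS' : e.symm '' S ⊆ U := (image_mono hS).trans (e.symm_image_image U).subset
  exact (hinj _ hS' (hSc.image _ e.symm.continuous.continuousOn)).comp e.symm.injective.injOn
    (mapsTo_image _ _)

lemma hasUnfoldedOpenSet_of_isPreconnected {σ : ℝ} (hσ : 0 < σ) {K : Set ℝ}
    (hP : interior (closure (range fun k => (tentMap σ)^[k] (1 / 2))) = ∅)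
    {H : Set (InvLim (tentMap σ) K)} (hH : IsPreconnected H) (hHnt : H.Nontrivial) :
    HasUnfoldedOpenSet H := by
  set P := closure (range fun k => (tentMap σ)^[k] (1 / 2))
  obtain ⟨x, hx, n, hxn⟩ : ∃ x ∈ H, ∃ n, x.1 n ∉ P := by
    by_contra! hall
    obtain ⟨x, hx, y, hy, hxy⟩ := hHnt
    refine hxy (Subtype.ext (funext fun n => ?_))
    exact (hH.image _ (InvLim.continuous_coord n).continuousOn).subsingleton_of_interior_eq_empty
      (P := P) (image_subset_iff.2 fun z hz => hall z hz n) hP ⟨x, hx, rfl⟩ ⟨y, hy, rfl⟩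
  have hcoord : Continuous fun z : H => z.1.1 n :=
    (InvLim.continuous_coord n).comp continuous_subtype_val
  refine ⟨{z | z.1.1 n ∉ P}, isClosed_closure.isOpen_compl.preimage hcoord, ⟨⟨x, hx⟩, hxn⟩, _,
    hcoord, fun S hSU hS => ?_⟩
  have hinj := InvLim.injOn_coord_of_isPreconnected hσ
    (hS.image _ continuous_subtype_val.continuousOn) (W := Pᶜ)
    (fun k hk => hk (subset_closure (mem_range_self k))) (by rintro _ ⟨z, hz, rfl⟩; exact hSU hz)
  exact hinj.comp Subtype.val_injective.injOn (mapsTo_image _ _)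

lemma exists_closedBall_subset_inter_Ioo {O : Set ℝ} (hO : IsOpen O) {a b y : ℝ} (hab : a < b)
    (hy : y ∈ O ∩ Icc a b) : ∃ v, ∃ ρ > 0, closedBall v ρ ⊆ O ∩ Ioo a b := by
  obtain ⟨v, hv⟩ : (O ∩ Ioo a b).Nonempty :=
    mem_closure_iff.1 (by rw [closure_Ioo hab.ne]; exact hy.2) O hO hy.1
  exact ⟨v, nhds_basis_closedBall.mem_iff.1 ((hO.inter isOpen_Ioo).mem_nhds hv)⟩

section TentCoreInvLim

variable {σ : ℝ}

lemma exists_coreThread_hairpin (h1 : 1 ≤ σ) (h2 : σ ≤ 2) (hsq : 2 < σ ^ 2)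
    (hdense : tentCore σ ⊆ closure {y | ∃ n : ℕ, 1 ≤ n ∧ y = (tentMap σ)^[n] (1 / 2)})
    {v ρ : ℝ} (hρ : 0 < ρ) (hJ : closedBall v ρ ⊆ Ioo (σ * (1 - σ / 2)) (σ / 2)) (M k : ℕ) :
    ∃ L ≥ k, ∃ d ≥ 0, Icc (1 / 2 - d) (1 / 2 + d) ⊆ tentCore σ ∧
      MapsTo (fun u => (coreThread h1 h2 L u).1 M) (Icc (1 / 2 - d) (1 / 2 + d))
        (closedBall v ρ) ∧
      dist ((coreThread h1 h2 L (1 / 2)).1 M) v ≤ ρ / 2 ∧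
      dist ((coreThread h1 h2 L (1 / 2 + d)).1 M) v = ρ := by
  have hJcore : closedBall v ρ ⊆ tentCore σ := hJ.trans Ioo_subset_Icc_self
  have hret : ∃ᶠ N in atTop, (tentMap σ)^[N] (1 / 2) ∈ ball v (ρ / 2) :=
    frequently_mem_of_subset_closure_range isOpen_ball (nonempty_ball.2 (by positivity)) <|
      (ball_subset_closedBall.trans (closedBall_subset_closedBall (by linarith))).trans <|
        hJcore.trans <| hdense.trans <| closure_mono fun y ⟨n, _, hy⟩ => ⟨n, hy.symm⟩
  have hleft : Icc (σ * (1 - σ / 2)) (1 / 2) ⊆ tentCore σ :=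
    Icc_subset_Icc le_rfl (half_mem_tentCore h1).2
  obtain ⟨N, hNv, hcov, hkN⟩ := (hret.and_eventually ((eventually_surjOn_tentMap_iterate h1 h2
    hsq hleft (by nlinarith)).and (eventually_ge_atTop (k + 1)))).exists
  have hvρ : v + ρ < σ / 2 :=
    (hJ (by rw [Real.closedBall_eq_Icc]; exact right_mem_Icc.2 (by linarith))).2
  obtain ⟨d, hd, hdcore, hdJ, hdρ⟩ := exists_hairpin h1 h2 (by omega : N ≠ 0) hcov hvρ
    (by linarith [mem_ball.1 hNv])
  have hcoord : ∀ u ∈ tentCore σ, (coreThread h1 h2 (N + M) u).1 M = (tentMap σ)^[N] u :=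
    fun u hu => by rw [coreThread_coord_of_le h1 h2 (by omega) hu, Nat.add_sub_cancel]
  refine ⟨N + M, by omega, d, hd, hdcore, fun u hu => ?_, ?_, ?_⟩
  · dsimp only
    rw [hcoord u (hdcore hu)]
    exact hdJ hu
  · rw [hcoord _ (half_mem_tentCore h1)]
    exact (mem_ball.1 hNv).le
  · rwa [hcoord _ (hdcore ⟨by linarith, le_rfl⟩)]

theorem not_hasUnfoldedOpenSet_invLim_tentCore (hσ : √2 < σ) (h2 : σ ≤ 2)
    (hdense : tentCore σ ⊆ closure {y | ∃ n : ℕ, 1 ≤ n ∧ y = (tentMap σ)^[n] (1 / 2)}) :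
    ¬ HasUnfoldedOpenSet (InvLim (tentMap σ) (tentCore σ)) := by
  have hsq : 2 < σ ^ 2 := by
    nlinarith [Real.sq_sqrt (show (0 : ℝ) ≤ 2 by norm_num), Real.sqrt_nonneg 2]
  have h1 : 1 ≤ σ := (Real.one_lt_sqrt_two.trans hσ).le
  have : CompactSpace (InvLim (tentMap σ) (tentCore σ)) :=
    InvLim.compactSpace (continuous_tentMap σ) isCompact_Icc
  rintro ⟨U, hU, ⟨y, hy⟩, g, hg, hinj⟩
  obtain ⟨M, O, hO, hyO, hOU⟩ := InvLim.exists_coord_preimage_subset (continuous_tentMap σ) hU hy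
  obtain ⟨v, ρ, hρ, hJ⟩ := exists_closedBall_subset_inter_Ioo hO (by nlinarith) ⟨hyO, y.2.1 M⟩
  choose L hL d hd hdcore hdJ hda hdA using
    exists_coreThread_hairpin h1 h2 hsq hdense hρ (hJ.trans inter_subset_right) M
  have hMc := InvLim.continuous_coord (f := tentMap σ) (K := tentCore σ) M
  set V := (fun z : InvLim (tentMap σ) (tentCore σ) => z.1 M) ⁻¹' closedBall v ρ
  have hVU : V ⊆ U := fun z hz => hOU (hJ hz).1
  set θ := fun k => coreThread h1 h2 (L k)
  set C := fun k => θ k '' Icc (1 / 2 - d k) (1 / 2 + d k)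
  have hC : ∀ k, IsPreconnected (C k) := fun k =>
    isPreconnected_Icc.image _ (continuous_coreThread h1 h2 _).continuousOn
  have hCV : ∀ k, C k ⊆ V := fun k => image_subset_iff.2 (hdJ k)
  have hgC : ∀ k, g '' C k ⊆ uIcc (g (θ k (1 / 2 + d k))) (g (θ k (1 / 2 - d k))) := fun k => by
    rw [uIcc_comm]
    exact image_coreThread_subset_uIcc h1 h2 hg (by linarith [hd k]) (hdcore k)
      (hinj _ ((hCV k).trans hVU) (hC k))
  have hmirror : ∀ j, ∀ᶠ k in atTop, (θ k (1 / 2 + d k)).1 j = (θ k (1 / 2 - d k)).1 j :=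
    fun j => (eventually_gt_atTop j).mono fun k hk => coreThread_coord_mirror h1 h2
      (hk.trans_le (hL k)) (hdcore k ⟨by linarith [hd k], le_rfl⟩)
      (hdcore k ⟨le_rfl, by linarith [hd k]⟩)
  obtain ⟨S, hSV, hS, hnot⟩ := exists_isPreconnected_not_injOn (V := V)
    (F₁ := (fun z => z.1 M) ⁻¹' closedBall v (ρ / 2)) (F₂ := (fun z => z.1 M) ⁻¹' sphere v ρ)
    (isClosed_closedBall.preimage hMc) (isClosed_closedBall.preimage hMc)
    (isClosed_sphere.preimage hMc)
    ((sphere_disjoint_ball.mono_right (closedBall_subset_ball (by linarith))).symm.preimage _)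
    hC hCV (a := fun k => θ k (1 / 2))
    (fun k => ⟨mem_image_of_mem _ ⟨by linarith [hd k], by linarith [hd k]⟩, hda k⟩)
    (fun k => ⟨mem_image_of_mem _ ⟨by linarith [hd k], le_rfl⟩, hdA k⟩)
    (InvLim.tendsto_uniformity_of_coord_eq hmirror) hg hgC
  exact hnot (hinj S (hSV.trans hVU) hS)

lemma nontrivial_invLim_tentCore (h1 : 1 < σ) (h2 : σ ≤ 2) :
    Nontrivial (InvLim (tentMap σ) (tentCore σ)) :=
  ⟨⟨_, _, (injOn_coreThread h1.le h2 0).ne (half_mem_tentCore h1.le)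
    (right_mem_tentCore h1.le) (by linarith : (1 / 2 : ℝ) ≠ σ / 2)⟩⟩

end TentCoreInvLim

theorem stmt18_general (s : ℝ) (hs : s ∈ Set.Ioc (Real.sqrt 2) 2) (T : ℝ → ℝ)
    (hT : ∀ x, T x = min (s * x) (s * (1 - x))) (c : ℝ) (hc : c = 1/2)
    (hCantor : Perfect (omegaSet T c) ∧ IsTotallyDisconnected (omegaSet T c))
    (s' : ℝ) (hs' : s' ∈ Set.Ioc (Real.sqrt 2) 2) (T' : ℝ → ℝ)
    (hT' : ∀ x, T' x = min (s' * x) (s' * (1 - x)))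
    (hdense : Set.Icc (T'^[2] c) (T' c) ⊆ closure {y | ∃ n : ℕ, 1 ≤ n ∧ y = T'^[n] c})
    (H : Set (InvLim T (Set.Icc 0 1)))
    (hconn : IsConnected H) :
    ¬ Nonempty (H ≃ₜ InvLim T' (Set.Icc (T'^[2] c) (T' c))) := by
  rintro ⟨e⟩
  obtain rfl : T = tentMap s := funext hT
  obtain rfl : T' = tentMap s' := funext hT'
  subst hc
  have hs'1 : 1 < s' := Real.one_lt_sqrt_two.trans hs'.1
  rw [tentCore_eq hs'1.le] at e hdense
  have := nontrivial_invLim_tentCore hs'1 hs'.2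
  have hX := hasUnfoldedOpenSet_of_isPreconnected ((Real.sqrt_nonneg 2).trans_lt hs.1)
    (interior_closure_range_iterate_eq_empty hCantor.1.closed hCantor.2) hconn.isPreconnected
    (nontrivial_coe_sort.1 e.surjective.nontrivial)
  exact not_hasUnfoldedOpenSet_invLim_tentCore hs'.1 hs'.2 hdense (hX.of_homeomorph e)

/-- If the critical orbit closure `ω(c)` of a tent map `T` is a Cantor
set with `c` recurrent, then the inverse limit `X` of `T` contains no subcontinuum
homeomorphic to the core inverse limit of a tent map whose critical orbit is dense in
its core. -/
theorem stmt18 (s : ℝ) (hs : s ∈ Set.Ioc (Real.sqrt 2) 2) (T : ℝ → ℝ)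
    (hT : ∀ x, T x = min (s * x) (s * (1 - x))) (c : ℝ) (hc : c = 1/2)
    (hinf : Function.Injective fun n : ℕ => T^[n] c)
    (hrec : c ∈ omegaSet T c)
    (hCantor : Perfect (omegaSet T c) ∧ IsTotallyDisconnected (omegaSet T c))
    (s' : ℝ) (hs' : s' ∈ Set.Ioc (Real.sqrt 2) 2) (T' : ℝ → ℝ)
    (hT' : ∀ x, T' x = min (s' * x) (s' * (1 - x)))
    (hdense : Set.Icc (T'^[2] c) (T' c) ⊆ closure {y | ∃ n : ℕ, 1 ≤ n ∧ y = T'^[n] c})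
    (H : Set (InvLim T (Set.Icc 0 1))) (hne : H.Nonempty)
    (hcomp : IsCompact H) (hconn : IsConnected H) :
    ¬ Nonempty (H ≃ₜ InvLim T' (Set.Icc (T'^[2] c) (T' c))) :=
  stmt18_general s hs T hT c hc hCantor s' hs' T' hT' hdense H hconn
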